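/- arXiv:2008.03599 — 3 statements merged into one kernel-verified Lean document; each statement's English description precedes it below -/
import Mathlib

section
/- Let R be a real inner product space, let m be a nonzero real number, let V(r) = (1/4)(‖r‖² − m²)², and let φ₀ ∈ R satisfy ‖φ₀‖² = m². Then for every v ∈ R, the second derivative at t = 0 of t ↦ V(φ₀ + t•v) is zero if and only if ⟪φ₀, v⟫ = 0. That is, the kernel of the Hessian quadratic form of V at the vacuum φ₀ is exactly the orthogonal complement of φ₀: the component v_⊥ of a fluctuation orthogonal to φ₀ is massless, while the component parallel to φ₀ is massive. -/
open scoped RealInnerProductSpace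

private lemma poly_second_deriv (c2 c3 c4 : ℝ) :
    deriv (deriv (fun t : ℝ => c2 * t ^ 2 + c3 * t ^ 3 + c4 * t ^ 4)) 0 = 2 * c2 := by
  have h1 : deriv (fun t : ℝ => c2 * t ^ 2 + c3 * t ^ 3 + c4 * t ^ 4)
      = fun t : ℝ => c2 * (2 * t) + c3 * (3 * t ^ 2) + c4 * (4 * t ^ 3) := by
    funext t
    have : HasDerivAt (fun t : ℝ => c2 * t ^ 2 + c3 * t ^ 3 + c4 * t ^ 4)
        (c2 * (2 * t) + c3 * (3 * t ^ 2) + c4 * (4 * t ^ 3)) t := by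
      have h2 : HasDerivAt (fun t : ℝ => t ^ 2) (2 * t) t := by
        simpa using hasDerivAt_pow 2 t
      have h3 : HasDerivAt (fun t : ℝ => t ^ 3) (3 * t ^ 2) t := by
        simpa using hasDerivAt_pow 3 t
      have h4 : HasDerivAt (fun t : ℝ => t ^ 4) (4 * t ^ 3) t := by
        simpa using hasDerivAt_pow 4 t
      exact ((h2.const_mul c2).add (h3.const_mul c3)).add (h4.const_mul c4)
    exact this.deriv
  rw [h1]
  have : HasDerivAt (fun t : ℝ => c2 * (2 * t) + c3 * (3 * t ^ 2) + c4 * (4 * t ^ 3))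
      (c2 * 2 + c3 * (3 * (2 * 0)) + c4 * (4 * (3 * 0 ^ 2))) 0 := by
    have h2 : HasDerivAt (fun t : ℝ => 2 * t) 2 (0 : ℝ) := by
      simpa using (hasDerivAt_id (0 : ℝ)).const_mul 2
    have h3 : HasDerivAt (fun t : ℝ => 3 * t ^ 2) (3 * (2 * 0)) (0 : ℝ) := by
      simpa using (hasDerivAt_pow 2 (0 : ℝ)).const_mul 3
    have h4 : HasDerivAt (fun t : ℝ => 4 * t ^ 3) (4 * (3 * 0 ^ 2)) (0 : ℝ) := by
      simpa using (hasDerivAt_pow 3 (0 : ℝ)).const_mul 4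
    exact ((h2.const_mul c2).add (h3.const_mul c3)).add (h4.const_mul c4)
  rw [this.deriv]
  ring

/-- For a nonzero mass parameter `m` and a vacuum `φ₀` with `‖φ₀‖² = m²`, the second
derivative at `t = 0` of `t ↦ V(φ₀ + t • v)`, with `V(r) = (1/4)(‖r‖² − m²)²`, vanishes
if and only if `⟪φ₀, v⟫ = 0`: the kernel of the Hessian of `V` at the vacuum is exactly
the orthogonal complement of `φ₀` (the massless, Goldstone, directions). -/
theorem quartic_potential_hessian_kernel
    {R : Type*} [NormedAddCommGroup R] [InnerProductSpace ℝ R]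
    (m : ℝ) (hm : m ≠ 0) (φ₀ : R) (hφ₀ : ‖φ₀‖ ^ 2 = m ^ 2) (v : R) :
    deriv (deriv (fun t : ℝ => (1 / 4 : ℝ) * (‖φ₀ + t • v‖ ^ 2 - m ^ 2) ^ 2)) 0 = 0 ↔
      ⟪φ₀, v⟫ = 0 := by
  set a := ⟪φ₀, v⟫ with ha
  set b := ‖v‖ ^ 2 with hb
  have hfun : (fun t : ℝ => (1 / 4 : ℝ) * (‖φ₀ + t • v‖ ^ 2 - m ^ 2) ^ 2)
      = fun t : ℝ => a ^ 2 * t ^ 2 + (a * b) * t ^ 3 + (b ^ 2 / 4) * t ^ 4 := by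
    funext t
    have hnorm : ‖φ₀ + t • v‖ ^ 2 = ‖φ₀‖ ^ 2 + 2 * (t * a) + t ^ 2 * b := by
      rw [norm_add_sq_real, real_inner_smul_right, norm_smul]
      simp [hb, mul_pow, sq_abs]
      exact Or.inl ha.symm
    rw [hnorm, hφ₀]
    ring
  rw [hfun, poly_second_deriv]
  constructor
  · intro h
    have : a ^ 2 = 0 := by linarith
    exact pow_eq_zero_iff (by norm_num) |>.mp this
  · intro h
    rw [h]; ring
end

section
/- Let R be a real inner product space, let m be a real number, let V(r) = (1/4)(‖r‖² − m²)², and let φ₀ ∈ R satisfy ‖φ₀‖² = m². Let A : R → R be a linear map that is skew-adjoint with respect to the inner product, i.e. ⟪A v, w⟫ = −⟪v, A w⟫ for all v, w ∈ R. Then ⟪φ₀, A φ₀⟫ = 0, and consequently the second derivative at t = 0 of t ↦ V(φ₀ + t•(A φ₀)) is zero. In other words, the infinitesimal variations of the field along the symmetry-group orbit of φ₀ (the Goldstone modes) are massless. -/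
open scoped RealInnerProductSpace

/-- Goldstone modes are massless: if `A : R → R` is a skew-adjoint linear map (an
infinitesimal symmetry preserving the inner product) and `φ₀` is a vacuum with
`‖φ₀‖² = m²`, then `⟪φ₀, A φ₀⟫ = 0`, and consequently the second derivative at `t = 0`
of `t ↦ V(φ₀ + t • (A φ₀))`, with `V(r) = (1/4)(‖r‖² − m²)²`, vanishes. -/
theorem goldstone_modes_are_massless
    {R : Type*} [NormedAddCommGroup R] [InnerProductSpace ℝ R]
    (m : ℝ) (φ₀ : R) (hφ₀ : ‖φ₀‖ ^ 2 = m ^ 2)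
    (A : R →ₗ[ℝ] R) (hA : ∀ v w : R, ⟪A v, w⟫ = -⟪v, A w⟫) :
    ⟪φ₀, A φ₀⟫ = 0 ∧
      deriv (deriv
        (fun t : ℝ => (1 / 4 : ℝ) * (‖φ₀ + t • (A φ₀)‖ ^ 2 - m ^ 2) ^ 2)) 0 = 0 := by
  have h1 : ⟪φ₀, A φ₀⟫ = 0 := by
    have h := hA φ₀ φ₀
    have hs := real_inner_comm φ₀ (A φ₀)
    linarith
  refine ⟨h1, ?_⟩
  have hfun : (fun t : ℝ => (1 / 4 : ℝ) * (‖φ₀ + t • (A φ₀)‖ ^ 2 - m ^ 2) ^ 2)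
      = fun t : ℝ => (1 / 4 : ℝ) * ‖A φ₀‖ ^ 4 * t ^ 4 := by
    funext t
    rw [norm_add_sq_real, hφ₀, real_inner_smul_right, h1, norm_smul,
      Real.norm_eq_abs, mul_pow, sq_abs]
    ring
  rw [hfun]
  have hd1 : deriv (fun t : ℝ => (1 / 4 : ℝ) * ‖A φ₀‖ ^ 4 * t ^ 4)
      = fun t : ℝ => (1 / 4 : ℝ) * ‖A φ₀‖ ^ 4 * (4 * t ^ 3) := by
    funext t
    rw [deriv_const_mul_field]
    simp
  rw [hd1]
  have hd2 : deriv (fun t : ℝ => (1 / 4 : ℝ) * ‖A φ₀‖ ^ 4 * (4 * t ^ 3)) 0 = 0 := by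
    rw [deriv_const_mul_field, deriv_const_mul_field]
    simp
  exact hd2
end

section
/- Let φ₀ be a nonzero vector in ℂ². Consider the real Lie algebra 𝔤 = ℝ ⊕ 𝔰𝔲(2), where 𝔰𝔲(2) is the space of 2×2 complex matrices X with Xᴴ = −X (skew-Hermitian) and trace X = 0, acting ℝ-linearly on ℂ² by (a, X)·v = (i a)•v + X v (the U(1) factor acting with weight 1 and the SU(2) factor by its fundamental representation). Then the stabilizer 𝔥 = {(a, X) ∈ 𝔤 : (i a)•φ₀ + X φ₀ = 0} is an ℝ-linear subspace of 𝔤 of dimension exactly 1. -/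
/-- The stabilizer of a vector `φ₀ ∈ ℂ²` inside the Lie algebra `𝔤 = ℝ ⊕ 𝔰𝔲(2)` of
`U(1) × SU(2)`, where `(a, X)` acts on `ℂ²` by `v ↦ (i a) • v + X v` (the `U(1)` factor
with weight 1, the `SU(2)` factor by its fundamental representation).  It is the
ℝ-subspace of pairs `(a, X)` with `X` skew-Hermitian and traceless such that
`(i a) • φ₀ + X φ₀ = 0`. -/
noncomputable def electroweakStabilizer (φ₀ : Fin 2 → ℂ) :
    Submodule ℝ (ℝ × Matrix (Fin 2) (Fin 2) ℂ) where
  carrier := {p | p.2.conjTranspose = -p.2 ∧ p.2.trace = 0 ∧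
      (Complex.I * (p.1 : ℂ)) • φ₀ + p.2.mulVec φ₀ = 0}
  zero_mem' := by
    simp [Matrix.zero_mulVec]
  add_mem' := by
    rintro ⟨a, X⟩ ⟨b, Y⟩ ⟨hX1, hX2, hX3⟩ ⟨hY1, hY2, hY3⟩
    refine ⟨?_, ?_, ?_⟩
    · simp [Matrix.conjTranspose_add, hX1, hY1]; abel
    · simp [hX2, hY2]
    · have : (Complex.I * ((a : ℂ) + (b : ℂ))) • φ₀ + (X + Y).mulVec φ₀ =
          ((Complex.I * (a : ℂ)) • φ₀ + X.mulVec φ₀) +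
            ((Complex.I * (b : ℂ)) • φ₀ + Y.mulVec φ₀) := by
        rw [Matrix.add_mulVec, mul_add, add_smul]
        abel
      have hX3' : (Complex.I * (a : ℂ)) • φ₀ + X.mulVec φ₀ = 0 := hX3
      have hY3' : (Complex.I * (b : ℂ)) • φ₀ + Y.mulVec φ₀ = 0 := hY3
      show (Complex.I * ((a + b : ℝ) : ℂ)) • φ₀ + (X + Y).mulVec φ₀ = 0
      rw [Complex.ofReal_add, this, hX3', hY3', add_zero]
  smul_mem' := by
    rintro c ⟨a, X⟩ ⟨hX1, hX2, hX3⟩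
    refine ⟨?_, ?_, ?_⟩
    · simp only [Prod.smul_snd, Matrix.conjTranspose_smul, star_trivial, hX1, smul_neg]
    · simp [Matrix.trace_smul, hX2]
    · have hsm : ((c • X : Matrix (Fin 2) (Fin 2) ℂ)).mulVec φ₀ = c • X.mulVec φ₀ :=
        Matrix.smul_mulVec c X φ₀
      have hcoe : ∀ w : Fin 2 → ℂ, c • w = ((c : ℂ)) • w := fun w => by
        ext i; simp [Complex.real_smul]
      calc (Complex.I * ((c * a : ℝ) : ℂ)) • φ₀ + (c • X).mulVec φ₀
          = ((c : ℂ) * (Complex.I * (a : ℂ))) • φ₀ + (c : ℂ) • X.mulVec φ₀ := by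
            rw [hsm, hcoe]; push_cast; ring_nf
        _ = (c : ℂ) • ((Complex.I * (a : ℂ)) • φ₀ + X.mulVec φ₀) := by
            rw [smul_add, smul_smul]
        _ = 0 := by rw [hX3, smul_zero]

lemma ew_aux_zero (u v : ℂ) (huv : u ≠ 0 ∨ v ≠ 0) (X : Matrix (Fin 2) (Fin 2) ℂ)
    (h1 : X.conjTranspose = -X) (h2 : X.trace = 0)
    (h3 : X 0 0 * u + X 0 1 * v = 0)
    (h4 : X 1 0 * u + X 1 1 * v = 0) : X = 0 := by
  have e00 : star (X 0 0) = -X 0 0 := by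
    have := congrFun (congrFun h1 0) 0; simpa [Matrix.conjTranspose_apply] using this
  have e01 : star (X 1 0) = -X 0 1 := by
    have := congrFun (congrFun h1 0) 1; simpa [Matrix.conjTranspose_apply] using this
  have etr : X 1 1 = -X 0 0 := by
    have h : X 0 0 + X 1 1 = 0 := by simpa [Matrix.trace, Fin.sum_univ_two] using h2
    linear_combination h
  have hX10 : X 1 0 = -star (X 0 1) := by
    rw [← star_star (X 1 0), e01, star_neg]
  have h3c : -(X 0 0) * star u + star (X 0 1) * star v = 0 := by
    have := congrArg star h3
    simpa [star_add, star_mul', e00] using this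
  have hBu : star (X 0 1) * u + X 0 0 * v = 0 := by
    rw [hX10, etr] at h4; linear_combination -h4
  have hA : X 0 0 * (u * star u + v * star v) = 0 := by
    linear_combination (-u) * h3c + star v * hBu
  have hne : u * star u + v * star v ≠ 0 := by
    have : (0:ℝ) < Complex.normSq u + Complex.normSq v := by
      rcases huv with h | h
      · exact add_pos_of_pos_of_nonneg (Complex.normSq_pos.2 h) (Complex.normSq_nonneg _)
      · exact add_pos_of_nonneg_of_pos (Complex.normSq_nonneg _) (Complex.normSq_pos.2 h)
    have h2' : ((Complex.normSq u + Complex.normSq v : ℝ) : ℂ) ≠ 0 :=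
      Complex.ofReal_ne_zero.2 (ne_of_gt this)
    simpa [Complex.star_def, Complex.mul_conj] using h2'
  have hA0 : X 0 0 = 0 := by
    rcases mul_eq_zero.1 hA with h | h
    · exact h
    · exact absurd h hne
  have hB0 : X 0 1 = 0 := by
    rcases huv with h | h
    · have h' := hBu
      rw [hA0, zero_mul, add_zero] at h'
      rcases mul_eq_zero.1 h' with h'' | h''
      · simpa using congrArg star h''
      · exact absurd h'' h
    · have h' := h3
      rw [hA0, zero_mul, zero_add] at h'
      rcases mul_eq_zero.1 h' with h'' | h''
      · exact h''
      · exact absurd h'' h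
  ext i j
  fin_cases i <;> fin_cases j <;> simp [hA0, hB0, hX10, etr]
/-- Electroweak symmetry breaking: for any nonzero Higgs vacuum `φ₀ ∈ ℂ²`, the unbroken
subalgebra — the stabilizer of `φ₀` in `ℝ ⊕ 𝔰𝔲(2)` — has real dimension exactly 1
(a copy of `𝔲(1)`, the photon). -/
theorem finrank_electroweakStabilizer (φ₀ : Fin 2 → ℂ) (hφ₀ : φ₀ ≠ 0) :
    Module.finrank ℝ (electroweakStabilizer φ₀) = 1 := by
  classical
  set u := φ₀ 0 with hu
  set v := φ₀ 1 with hv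
  have huv : u ≠ 0 ∨ v ≠ 0 := by
    by_contra h
    push_neg at h
    apply hφ₀
    ext i
    fin_cases i
    · exact h.1
    · exact h.2
  set N : ℝ := Complex.normSq u + Complex.normSq v with hNdef
  have hNpos : 0 < N := by
    rcases huv with h | h
    · exact add_pos_of_pos_of_nonneg (Complex.normSq_pos.2 h) (Complex.normSq_nonneg _)
    · exact add_pos_of_nonneg_of_pos (Complex.normSq_nonneg _) (Complex.normSq_pos.2 h)
  have hN : (N : ℂ) ≠ 0 := Complex.ofReal_ne_zero.2 (ne_of_gt hNpos)
  have huu : u * star u = (Complex.normSq u : ℂ) := by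
    simp [Complex.star_def, Complex.mul_conj]
  have hvv : v * star v = (Complex.normSq v : ℂ) := by
    simp [Complex.star_def, Complex.mul_conj]
  have hNc : ((N : ℝ) : ℂ) = (Complex.normSq u : ℂ) + (Complex.normSq v : ℂ) := by
    rw [hNdef]; push_cast; ring
  have hd : ((Complex.normSq u - Complex.normSq v : ℝ) : ℂ)
      = (Complex.normSq u : ℂ) - (Complex.normSq v : ℂ) := by push_cast; ring
  -- the explicit nonzero element with `a = N`
  set X : Matrix (Fin 2) (Fin 2) ℂ :=
    !![-Complex.I * ((Complex.normSq u - Complex.normSq v : ℝ) : ℂ),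
        -2 * Complex.I * (u * star v);
      -2 * Complex.I * (v * star u),
        Complex.I * ((Complex.normSq u - Complex.normSq v : ℝ) : ℂ)] with hX
  have hmem : (N, X) ∈ electroweakStabilizer φ₀ := by
    refine ⟨?_, ?_, ?_⟩
    · ext i j
      fin_cases i <;> fin_cases j <;>
        simp [hX, Matrix.conjTranspose_apply, Complex.star_def, map_mul,
          Complex.conj_ofReal, Complex.conj_I] <;> try ring
    · simp [hX, Matrix.trace_fin_two]
      try ring
    · funext i
      fin_cases i <;>
      · simp only [Fin.mk_zero, Fin.mk_one, Fin.isValue, Pi.add_apply, Pi.smul_apply,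
          smul_eq_mul, Matrix.mulVec, dotProduct, Fin.sum_univ_two, hX,
          Pi.zero_apply, Matrix.of_apply, Matrix.cons_val', Matrix.cons_val_zero, Matrix.cons_val_one,
          Matrix.head_cons, Matrix.empty_val', Matrix.cons_val_fin_one, Matrix.head_fin_const]
        simp only [← hu, ← hv]
        simp only [Complex.star_def] at huu hvv ⊢
        first
        | linear_combination (Complex.I * u) * hNc - (Complex.I * u) * hd -
            (2 * Complex.I * u) * hvv
        | linear_combination (Complex.I * v) * hNc + (Complex.I * v) * hd -
            (2 * Complex.I * v) * huu
  have hnontriv : Nontrivial (electroweakStabilizer φ₀) := by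
    refine nontrivial_of_ne ⟨(N, X), hmem⟩ 0 ?_
    intro hcontra
    have h0 : (N, X) = (0 : ℝ × Matrix (Fin 2) (Fin 2) ℂ) := congrArg Subtype.val hcontra
    have h1 : N = 0 := congrArg Prod.fst h0
    exact hNpos.ne' h1
  -- the projection to the `U(1)` coordinate is injective on the stabilizer
  have hinj : Function.Injective
      ((LinearMap.fst ℝ ℝ (Matrix (Fin 2) (Fin 2) ℂ)).comp
        (electroweakStabilizer φ₀).subtype) := by
    rw [← LinearMap.ker_eq_bot, LinearMap.ker_eq_bot']
    rintro ⟨⟨a, Y⟩, hY1, hY2, hY3⟩ ha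
    have ha' : a = 0 := ha
    subst ha'
    have hY3' : Y.mulVec φ₀ = 0 := by
      simpa using hY3
    have hc0 : Y 0 0 * u + Y 0 1 * v = 0 := by
      have := congrFun hY3' 0
      simpa [Matrix.mulVec, dotProduct, Fin.sum_univ_two] using this
    have hc1 : Y 1 0 * u + Y 1 1 * v = 0 := by
      have := congrFun hY3' 1
      simpa [Matrix.mulVec, dotProduct, Fin.sum_univ_two] using this
    have hY0 : Y = 0 := ew_aux_zero u v huv Y hY1 hY2 hc0 hc1
    exact Subtype.ext (by simp [Prod.ext_iff, hY0])
  have hle : Module.finrank ℝ (electroweakStabilizer φ₀) ≤ 1 := by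
    have := LinearMap.finrank_le_finrank_of_injective hinj
    simpa using this
  have hge : 1 ≤ Module.finrank ℝ (electroweakStabilizer φ₀) := by
    have : 0 < Module.finrank ℝ (electroweakStabilizer φ₀) := Module.finrank_pos
    omega
  omega
end
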